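/- arXiv:2301.12187 — 3 statements merged into one kernel-verified Lean document; each statement's English description precedes it below -/
import Mathlib

section
/- Under the recurrence assumptions, for every l ≥ 1 and every real t > T_opt(0, l), the pair (A(l,t), S(l,t)) is an optimal solution of problem P(l, t); that is: A(l,t) ⊆ S(l,t) ⊆ {1, …, l−1}, the feasibility constraint chainSum T ({0} ∪ S(l,t) ∪ {l}) < t holds, and for every pair of finite sets (A', S') with A' ⊆ S' ⊆ {1, …, l−1} and chainSum T ({0} ∪ S' ∪ {l}) < t one has chainSum I ({0} ∪ A' ∪ {l}) ≤ chainSum I ({0} ∪ A(l,t) ∪ {l}). -/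
noncomputable section

/-- Chain sum of `f` over the consecutive pairs of the elements of `P` in increasing order. -/
def chainSum (f : ℕ → ℕ → ℝ) (P : Finset ℕ) : ℝ :=
  (List.zipWith f (P.sort (· ≤ ·)) (P.sort (· ≤ ·)).tail).sum

/-- Optimal latency `T_opt(k,l)`: the minimum of `chainSum T ({k} ∪ S ∪ {l})`
over all finite sets `S ⊆ {k+1,…,l−1}`. -/
def Topt (T : ℕ → ℕ → ℝ) (k l : ℕ) : ℝ :=
  ((Finset.Ioo k l).powerset.image (fun S => chainSum T ({k} ∪ S ∪ {l}))).min'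
    ((Finset.powerset_nonempty _).image _)

/-!
Strong induction on `l`, with the invariant that `(A l t, S l t)` is optimal for `P(l, t)` whenever
`T_opt(0, l) < t`; it holds trivially at `l = 0`, so the branch `k = 0` of the recurrence needs no
separate treatment. Chain sums add when two sets are glued at a common endpoint. Hence the
recursive solution, i.e. the solution at `k` followed by a `T`-optimal path from `k` to `l`, is
feasible. Conversely a feasible `(A', S')` splits at the last element `k'` of `A'` (`0` if there is
none): the part of `S'` after `k'` costs at least `T_opt(k', l)`, so the part before `k'` solves
`P(k', t - T_opt(k', l))`, and the `I`-value of `A'` is that of a solution of this problem plus the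
single hop `k' → l`. Induction at `k'` and the maximality of `k` finish the argument.
-/

open Finset

theorem List.sum_zipWith_tail_append_cons {α M : Type*} [AddMonoid M] (f : α → α → M)
    (m : α) (L₂ : List α) : ∀ L₁ : List α,
    (zipWith f (L₁ ++ m :: L₂) (L₁ ++ m :: L₂).tail).sum =
      (zipWith f (L₁ ++ [m]) (L₁ ++ [m]).tail).sum + (zipWith f (m :: L₂) L₂).sum
  | [] => by simp
  | [a] => by simp
  | a :: b :: L₁ => by
    have ih := List.sum_zipWith_tail_append_cons f m L₂ (b :: L₁)
    simp only [cons_append, tail_cons, zipWith_cons_cons, sum_cons] at ih ⊢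
    rw [ih, add_assoc]

theorem Finset.sort_union_of_forall_lt {α : Type*} [LinearOrder α] {P Q : Finset α}
    (h : ∀ p ∈ P, ∀ q ∈ Q, p < q) :
    (P ∪ Q).sort (· ≤ ·) = P.sort (· ≤ ·) ++ Q.sort (· ≤ ·) := by
  have hnodup : (P.sort (· ≤ ·) ++ Q.sort (· ≤ ·)).Nodup :=
    List.nodup_append.2 ⟨P.sort_nodup _, Q.sort_nodup _,
      fun p hp q hq => (h p (by simpa using hp) q (by simpa using hq)).ne⟩
  have hsorted : (P.sort (· ≤ ·) ++ Q.sort (· ≤ ·)).Pairwise (· ≤ ·) :=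
    List.pairwise_append.2 ⟨P.pairwise_sort _, Q.pairwise_sort _,
      fun p hp q hq => (h p (by simpa using hp) q (by simpa using hq)).le⟩
  simpa using (List.toFinset_sort (· ≤ ·) hnodup).2 hsorted

section ChainSum

variable (f : ℕ → ℕ → ℝ)

theorem chainSum_singleton (k : ℕ) : chainSum f {k} = 0 := by
  simp [chainSum]

theorem chainSum_pair {k l : ℕ} (h : k < l) : chainSum f {k, l} = f k l := by
  rw [chainSum, sort_insert _ (by simpa using h.le) (by simpa using h.ne)]
  simp

theorem chainSum_union_of_le {P Q : Finset ℕ} {m : ℕ} (hmP : m ∈ P) (hmQ : m ∈ Q)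
    (hP : ∀ p ∈ P, p ≤ m) (hQ : ∀ q ∈ Q, m ≤ q) :
    chainSum f (P ∪ Q) = chainSum f P + chainSum f Q := by
  have hlt : ∀ p ∈ P.erase m, ∀ q ∈ Q, p < q := fun p hp q hq =>
    ((hP p (mem_of_mem_erase hp)).lt_of_ne (ne_of_mem_erase hp)).trans_le (hQ q hq)
  have hsortP : P.sort (· ≤ ·) = (P.erase m).sort (· ≤ ·) ++ [m] := by
    conv_lhs => rw [← erase_union_eq m P hmP]
    rw [sort_union_of_forall_lt fun p hp q hq => hlt p hp q (by simp_all), sort_singleton]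
  have hsortQ : Q.sort (· ≤ ·) = m :: (Q.erase m).sort (· ≤ ·) := by
    conv_lhs => rw [← insert_erase hmQ]
    exact sort_insert _ (fun q hq => hQ q (mem_of_mem_erase hq)) (notMem_erase m Q)
  have hsortPQ :
      (P ∪ Q).sort (· ≤ ·) = (P.erase m).sort (· ≤ ·) ++ Q.sort (· ≤ ·) := by
    rw [← erase_union_of_mem hmQ P, sort_union_of_forall_lt hlt]
  rw [chainSum, chainSum, chainSum, hsortPQ, hsortP, hsortQ]
  exact List.sum_zipWith_tail_append_cons f m _ _

theorem union_subset_Icc_of_subset_Ioo {i l : ℕ} {S : Finset ℕ} (hS : S ⊆ Ioo i l)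
    (hil : i ≤ l) : {i} ∪ S ∪ {l} ⊆ Icc i l :=
  union_subset (union_subset (by simpa using hil) (hS.trans Ioo_subset_Icc_self))
    (by simpa using hil)

theorem chainSum_split_at {i l m : ℕ} {S : Finset ℕ} (hS : S ⊆ Ioo i l) (hil : i ≤ l)
    (hm : m ∈ {i} ∪ S ∪ {l}) :
    chainSum f ({i} ∪ S ∪ {l}) = chainSum f ({i} ∪ S.filter (· < m) ∪ {m}) +
      chainSum f ({m} ∪ S.filter (m < ·) ∪ {l}) := by
  have hS' : ∀ x ∈ S, i < x ∧ x < l := fun x hx => mem_Ioo.1 (hS hx)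
  simp only [mem_union, mem_singleton] at hm
  rw [← chainSum_union_of_le f (m := m) (by simp) (by simp)]
  · congr 1
    ext x
    simp only [mem_union, mem_singleton, mem_filter]
    grind
  all_goals
    intro p hp
    simp only [mem_union, mem_singleton, mem_filter] at hp
    grind

theorem chainSum_union_pair {i k l : ℕ} {S : Finset ℕ} (hS : S ⊆ Ioo i k) (hik : i ≤ k)
    (hkl : k < l) : chainSum f ({i} ∪ S ∪ {k, l}) = chainSum f ({i} ∪ S ∪ {k}) + f k l := by
  rw [← chainSum_pair f hkl, ← chainSum_union_of_le f (m := k) (by simp) (by simp)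
    (fun p hp => (mem_Icc.1 (union_subset_Icc_of_subset_Ioo hS hik hp)).2)
    (by simpa using hkl.le)]
  congr 1
  ext x
  simp only [mem_union, mem_insert, mem_singleton]
  tauto

end ChainSum

theorem Topt_le (T : ℕ → ℕ → ℝ) {k l : ℕ} {S : Finset ℕ} (hS : S ⊆ Ioo k l) :
    Topt T k l ≤ chainSum T ({k} ∪ S ∪ {l}) :=
  min'_le _ _ (mem_image_of_mem _ (mem_powerset.mpr hS))

theorem Topt_self (T : ℕ → ℕ → ℝ) (k : ℕ) : Topt T k k = 0 := by
  simp [Topt, chainSum_singleton]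

structure IsFeasible (T : ℕ → ℕ → ℝ) (l : ℕ) (t : ℝ) (A S : Finset ℕ) : Prop where
  subset : A ⊆ S
  subset_Ioo : S ⊆ Ioo 0 l
  chainSum_lt : chainSum T ({0} ∪ S ∪ {l}) < t

/-- `(A, S)` is an optimal solution of the problem `P(l, t)`. -/
def IsOptimalSolution (T I : ℕ → ℕ → ℝ) (l : ℕ) (t : ℝ) (A S : Finset ℕ) : Prop :=
  IsFeasible T l t A S ∧ ∀ A' S', IsFeasible T l t A' S' →
    chainSum I ({0} ∪ A' ∪ {l}) ≤ chainSum I ({0} ∪ A ∪ {l})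

theorem isOptimalSolution_zero (T I : ℕ → ℕ → ℝ) {t : ℝ} (ht : Topt T 0 0 < t) :
    IsOptimalSolution T I 0 t ∅ ∅ := by
  refine ⟨⟨subset_rfl, empty_subset _, ?_⟩, fun A' S' h' => ?_⟩
  · simpa [chainSum_singleton, Topt_self] using ht
  · rw [subset_empty.1 (h'.subset.trans (by simpa using h'.subset_Ioo))]

namespace IsFeasible

variable {T : ℕ → ℕ → ℝ} {l : ℕ} {t : ℝ} {A S : Finset ℕ}

theorem Topt_lt (h : IsFeasible T l t A S) : Topt T 0 l < t :=
  (Topt_le T h.subset_Ioo).trans_lt h.chainSum_lt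

theorem extend {k : ℕ} {Sopt : Finset ℕ} (h : IsFeasible T k t A S) (hkl : k < l)
    (hSopt : Sopt ⊆ Ioo k l) :
    IsFeasible T l (t + chainSum T ({k} ∪ Sopt ∪ {l})) (A ∪ ({k} \ {0}))
      (S ∪ ({k} \ {0}) ∪ Sopt) where
  subset := union_subset_union h.subset subset_rfl |>.trans subset_union_left
  subset_Ioo := by
    have hS := h.subset_Ioo
    intro x hx
    simp only [mem_union, mem_sdiff, mem_singleton] at hx
    rcases hx with (hx | ⟨rfl, hx⟩) | hx
    · exact Ioo_subset_Ioo_right hkl.le (hS hx)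
    · exact mem_Ioo.2 ⟨Nat.pos_of_ne_zero hx, hkl⟩
    · exact Ioo_subset_Ioo_left k.zero_le (hSopt hx)
  chainSum_lt := by
    have hsplit : ({0} ∪ (S ∪ ({k} \ {0}) ∪ Sopt) ∪ {l} : Finset ℕ) =
        ({0} ∪ S ∪ {k}) ∪ ({k} ∪ Sopt ∪ {l}) := by
      ext x
      simp only [mem_union, mem_sdiff, mem_singleton]
      grind
    rw [hsplit, chainSum_union_of_le T (m := k) (by simp) (by simp)
      (fun p hp => (mem_Icc.1 (union_subset_Icc_of_subset_Ioo h.subset_Ioo k.zero_le hp)).2)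
      (fun q hq => (mem_Icc.1 (union_subset_Icc_of_subset_Ioo hSopt hkl.le hq)).1)]
    linarith [h.chainSum_lt]

theorem split_last (hl : 0 < l) (h : IsFeasible T l t A S) :
    ∃ k < l, IsFeasible T k (t - Topt T k l) (A.erase k) (S.filter (· < k)) ∧
      ({0} ∪ A ∪ {l} : Finset ℕ) = {0} ∪ A.erase k ∪ {k, l} := by
  set k := (insert 0 A).max' (insert_nonempty 0 A)
  have hk : k = 0 ∨ k ∈ A := mem_insert.1 (max'_mem _ _)
  have hAk : ∀ a ∈ A, a ≤ k := fun a ha => le_max' _ a (mem_insert_of_mem ha)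
  have hS : ∀ x ∈ S, 0 < x ∧ x < l := fun x hx => mem_Ioo.1 (h.subset_Ioo hx)
  have hAS := h.subset
  have hkl : k < l := by
    rcases hk with hk | hk
    exacts [hk ▸ hl, (hS k (hAS hk)).2]
  have hsplit := chainSum_split_at T h.subset_Ioo l.zero_le (m := k) (by
    simp only [mem_union, mem_singleton]
    grind)
  have hTopt : Topt T k l ≤ chainSum T ({k} ∪ S.filter (k < ·) ∪ {l}) := Topt_le T (by
    intro x hx
    simp only [mem_filter, mem_Ioo] at hx ⊢
    grind)
  refine ⟨k, hkl, ⟨?_, ?_, by linarith [h.chainSum_lt]⟩, ?_⟩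
  · intro a ha
    simp only [mem_erase, mem_filter] at ha ⊢
    grind
  · intro x hx
    simp only [mem_filter, mem_Ioo] at hx ⊢
    grind
  · ext x
    simp only [mem_union, mem_erase, mem_insert, mem_singleton]
    grind

theorem exists_chainSum_le {I : ℕ → ℕ → ℝ} {A' S' : ℕ → ℝ → Finset ℕ}
    (hl : 0 < l) (h : IsFeasible T l t A S)
    (ih : ∀ k < l, ∀ t', Topt T 0 k < t' → IsOptimalSolution T I k t' (A' k t') (S' k t')) :
    ∃ k < l, Topt T 0 k + Topt T k l < t ∧
      chainSum I ({0} ∪ A ∪ {l}) ≤ chainSum I ({0} ∪ A' k (t - Topt T k l) ∪ {k, l}) := by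
  obtain ⟨k, hkl, hfeas, hset⟩ := h.split_last hl
  have hk : Topt T 0 k < t - Topt T k l := hfeas.Topt_lt
  obtain ⟨hopt_feas, hopt⟩ := ih k hkl _ hk
  refine ⟨k, hkl, by linarith, ?_⟩
  rw [hset, chainSum_union_pair I (hfeas.subset.trans hfeas.subset_Ioo) k.zero_le hkl,
    chainSum_union_pair I (hopt_feas.subset.trans hopt_feas.subset_Ioo) k.zero_le hkl]
  exact add_le_add_left (hopt _ _ hfeas) _

end IsFeasible

theorem optimality_of_DP_general
    (T I : ℕ → ℕ → ℝ) (A S : ℕ → ℝ → Finset ℕ)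
    (hbase : ∀ t, A 0 t = ∅ ∧ S 0 t = ∅)
    (hrec : ∀ l, 1 ≤ l → ∀ t : ℝ, Topt T 0 l < t →
      ∃ k, k < l ∧ ∃ Sopt : Finset ℕ, Sopt ⊆ Finset.Ioo k l ∧
        chainSum T ({k} ∪ Sopt ∪ {l}) = Topt T k l ∧
        Topt T 0 k + Topt T k l < t ∧
        (∀ k', k' < l → Topt T 0 k' + Topt T k' l < t →
          chainSum I ({0} ∪ A k' (t - Topt T k' l) ∪ {k', l}) ≤
            chainSum I ({0} ∪ A k (t - Topt T k l) ∪ {k, l})) ∧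
        A l t = A k (t - Topt T k l) ∪ ({k} \ {0}) ∧
        S l t = S k (t - Topt T k l) ∪ ({k} \ {0}) ∪ Sopt) :
    ∀ l, 1 ≤ l → ∀ t : ℝ, Topt T 0 l < t →
      A l t ⊆ S l t ∧ S l t ⊆ Finset.Ioo 0 l ∧
      chainSum T ({0} ∪ S l t ∪ {l}) < t ∧
      (∀ A' S' : Finset ℕ, A' ⊆ S' → S' ⊆ Finset.Ioo 0 l →
        chainSum T ({0} ∪ S' ∪ {l}) < t →
        chainSum I ({0} ∪ A' ∪ {l}) ≤ chainSum I ({0} ∪ A l t ∪ {l})) := by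
  have hopt : ∀ l t, Topt T 0 l < t → IsOptimalSolution T I l t (A l t) (S l t) := by
    intro l
    induction l using Nat.strong_induction_on with
    | _ l ih =>
    intro t ht
    rcases Nat.eq_zero_or_pos l with rfl | hl
    · rw [(hbase t).1, (hbase t).2]
      exact isOptimalSolution_zero T I ht
    obtain ⟨k, hkl, Sopt, hSopt, hSopt_eq, hk, hmax, hA, hS⟩ := hrec l hl t ht
    have hfeas : IsFeasible T l t (A l t) (S l t) := by
      have := (ih k hkl _ (lt_sub_iff_add_lt.2 hk)).1.extend hkl hSopt
      rwa [hSopt_eq, sub_add_cancel, ← hA, ← hS] at this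
    refine ⟨hfeas, fun A' S' h' => ?_⟩
    obtain ⟨k', hk'l, hk', hle⟩ := h'.exists_chainSum_le hl ih
    calc chainSum I ({0} ∪ A' ∪ {l}) ≤ _ := hle
      _ ≤ chainSum I ({0} ∪ A k (t - Topt T k l) ∪ {k, l}) := hmax k' hk'l hk'
      _ = chainSum I ({0} ∪ A l t ∪ {l}) := by
        rw [hA]
        congr 1
        ext x
        simp only [mem_union, mem_sdiff, mem_insert, mem_singleton]
        grind
  intro l _ t ht
  obtain ⟨⟨hAS, hS, hT⟩, hmax⟩ := hopt l t ht
  exact ⟨hAS, hS, hT, fun A' S' hA' hS' hT' => hmax A' S' ⟨hA', hS', hT'⟩⟩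

/-- Under the recurrence assumptions, for every `l ≥ 1` and `t > T_opt(0,l)`,
`(A l t, S l t)` is an optimal solution of problem `P(l,t)`. -/
theorem optimality_of_DP
    (T I : ℕ → ℕ → ℝ) (A S : ℕ → ℝ → Finset ℕ)
    (hA_sub : ∀ l t, A l t ⊆ Finset.Ioo 0 l)
    (hS_sub : ∀ l t, S l t ⊆ Finset.Ioo 0 l)
    (hbase : ∀ t, A 0 t = ∅ ∧ S 0 t = ∅)
    (hrec : ∀ l, 1 ≤ l → ∀ t : ℝ, Topt T 0 l < t →
      ∃ k, k < l ∧ ∃ Sopt : Finset ℕ, Sopt ⊆ Finset.Ioo k l ∧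
        chainSum T ({k} ∪ Sopt ∪ {l}) = Topt T k l ∧
        Topt T 0 k + Topt T k l < t ∧
        (∀ k', k' < l → Topt T 0 k' + Topt T k' l < t →
          chainSum I ({0} ∪ A k' (t - Topt T k' l) ∪ {k', l}) ≤
            chainSum I ({0} ∪ A k (t - Topt T k l) ∪ {k, l})) ∧
        A l t = A k (t - Topt T k l) ∪ ({k} \ {0}) ∧
        S l t = S k (t - Topt T k l) ∪ ({k} \ {0}) ∪ Sopt) :
    ∀ l, 1 ≤ l → ∀ t : ℝ, Topt T 0 l < t →
      A l t ⊆ S l t ∧ S l t ⊆ Finset.Ioo 0 l ∧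
      chainSum T ({0} ∪ S l t ∪ {l}) < t ∧
      (∀ A' S' : Finset ℕ, A' ⊆ S' → S' ⊆ Finset.Ioo 0 l →
        chainSum T ({0} ∪ S' ∪ {l}) < t →
        chainSum I ({0} ∪ A' ∪ {l}) ≤ chainSum I ({0} ∪ A l t ∪ {l})) :=
  optimality_of_DP_general T I A S hbase hrec
end
end

section
/- For all natural numbers k < l, the optimal per-segment latency satisfies the Bellman equation T_opt(k, l) = min over m ∈ {k, k+1, …, l−1} of (T_opt(k, m) + T(m, l)). -/
/-!
Removing the last point `l` from an optimal chain from `k` to `l` leaves a chain from `k` to its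
maximum `m < l`, and appending `l` to an optimal chain from `k` to `m` gives a chain from `k` to
`l`. Both directions of the Bellman equation then follow from the chain sum of `P ∪ {l}`, for `l`
above `P`, being that of `P` plus `T (max P) l`.
-/

noncomputable section

open Finset

theorem Finset.sort_insert_of_forall_lt {α : Type*} [LinearOrder α] {s : Finset α} {a : α}
    (h : ∀ b ∈ s, b < a) : (insert a s).sort (· ≤ ·) = s.sort (· ≤ ·) ++ [a] := by
  have ha : a ∉ s := fun has => (h a has).false
  have hnodup : (s.sort (· ≤ ·) ++ [a]).Nodup :=
    List.nodup_append.2 ⟨s.sort_nodup _, List.nodup_singleton a, by simpa using ha⟩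
  have hpair : (s.sort (· ≤ ·) ++ [a]).Pairwise (· ≤ ·) :=
    List.pairwise_append.2 ⟨s.pairwise_sort _, List.pairwise_singleton _ a,
      fun b hb c hc => by
        simp only [mem_sort, List.mem_singleton] at hb hc
        exact hc ▸ (h b hb).le⟩
  have hset : (s.sort (· ≤ ·) ++ [a]).toFinset = insert a s := by
    rw [List.toFinset_append, sort_toFinset, List.toFinset_cons, List.toFinset_nil, insert_empty,
      union_comm, insert_eq]
  rw [← hset]
  exact (List.toFinset_sort (· ≤ ·) hnodup).2 hpair

theorem List.sum_zipWith_tail_append_singleton {α M : Type*} [AddCommMonoid M]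
    (f : α → α → M) (x : α) :
    ∀ (L : List α) (hL : L ≠ []),
      (zipWith f (L ++ [x]) (L ++ [x]).tail).sum = (zipWith f L L.tail).sum + f (L.getLast hL) x
  | [a], _ => by simp
  | a :: b :: t, _ => by
    simp only [cons_append, tail_cons, zipWith_cons_cons, sum_cons, getLast_cons_cons]
    have ih := sum_zipWith_tail_append_singleton f x (b :: t) (cons_ne_nil b t)
    rw [cons_append, tail_cons, tail_cons] at ih
    rw [ih, add_assoc]

theorem chainSum_insert_of_forall_lt (f : ℕ → ℕ → ℝ) {P : Finset ℕ} (hP : P.Nonempty) {l : ℕ}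
    (h : ∀ p ∈ P, p < l) : chainSum f (insert l P) = chainSum f P + f (P.max' hP) l := by
  have hne : P.sort (· ≤ ·) ≠ [] := List.ne_nil_of_length_pos (by simpa using hP.card_pos)
  rw [chainSum, sort_insert_of_forall_lt h,
    List.sum_zipWith_tail_append_singleton f l _ hne, chainSum, max'_eq_sorted_last,
    List.getLast_eq_getElem]

namespace Topt

variable (T : ℕ → ℕ → ℝ) {k l m : ℕ}

theorem le_chainSum {P : Finset ℕ} (hP : P ⊆ Icc k l) (hk : k ∈ P) (hl : l ∈ P) :
    Topt T k l ≤ chainSum T P := by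
  have hS : P ∩ Ioo k l ∈ (Ioo k l).powerset := mem_powerset.2 inter_subset_right
  have hP_eq : {k} ∪ (P ∩ Ioo k l) ∪ {l} = P := by
    ext x
    have := @hP x
    simp only [mem_union, mem_singleton, mem_inter, mem_Ioo, mem_Icc] at this ⊢
    grind
  exact hP_eq ▸ min'_le _ _ (mem_image_of_mem _ hS)

theorem exists_chainSum_eq (hkl : k ≤ l) :
    ∃ P ⊆ Icc k l, k ∈ P ∧ l ∈ P ∧ chainSum T P = Topt T k l := by
  obtain ⟨S, hS, hS_eq⟩ := mem_image.1 (min'_mem _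
    (((powerset_nonempty (Ioo k l))).image fun S => chainSum T ({k} ∪ S ∪ {l})))
  refine ⟨{k} ∪ S ∪ {l}, ?_, by simp, by simp, hS_eq⟩
  intro x hx
  simp only [mem_union, mem_singleton] at hx
  rcases hx with (rfl | hx) | rfl
  · exact left_mem_Icc.2 hkl
  · exact Ioo_subset_Icc_self (mem_powerset.1 hS hx)
  · exact right_mem_Icc.2 hkl

theorem le_add (hkm : k ≤ m) (hml : m < l) : Topt T k l ≤ Topt T k m + T m l := by
  obtain ⟨P, hP, hkP, hmP, hP_eq⟩ := exists_chainSum_eq T hkm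
  have hmax : P.max' ⟨k, hkP⟩ = m :=
    le_antisymm (P.max'_le _ _ fun x hx => (mem_Icc.1 (hP hx)).2) (P.le_max' m hmP)
  have hlt : ∀ p ∈ P, p < l := fun p hp => (mem_Icc.1 (hP hp)).2.trans_lt hml
  calc Topt T k l ≤ chainSum T (insert l P) := by
        refine le_chainSum T ?_ (mem_insert_of_mem hkP) (mem_insert_self l P)
        exact insert_subset (right_mem_Icc.2 (hkm.trans hml.le))
          (hP.trans (Icc_subset_Icc_right hml.le))
    _ = Topt T k m + T m l := by rw [chainSum_insert_of_forall_lt T ⟨k, hkP⟩ hlt, hmax, hP_eq]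

theorem exists_add_le (hkl : k < l) :
    ∃ m ∈ Ico k l, Topt T k m + T m l ≤ Topt T k l := by
  obtain ⟨P, hP, hkP, hlP, hP_eq⟩ := exists_chainSum_eq T hkl.le
  set Q := P.erase l
  have hkQ : k ∈ Q := mem_erase.2 ⟨hkl.ne, hkP⟩
  have hlt : ∀ x ∈ Q, x < l := fun x hx =>
    lt_of_le_of_ne (mem_Icc.1 (hP (mem_of_mem_erase hx))).2 (ne_of_mem_erase hx)
  have hsplit := chainSum_insert_of_forall_lt T ⟨k, hkQ⟩ hlt
  set m := Q.max' ⟨k, hkQ⟩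
  have hmQ : m ∈ Q := Q.max'_mem _
  have hQ : Q ⊆ Icc k m := fun x hx =>
    mem_Icc.2 ⟨(mem_Icc.1 (hP (mem_of_mem_erase hx))).1, Q.le_max' x hx⟩
  refine ⟨m, mem_Ico.2 ⟨Q.le_max' k hkQ, hlt m hmQ⟩, ?_⟩
  calc Topt T k m + T m l ≤ chainSum T Q + T m l := by gcongr; exact le_chainSum T hQ hkQ hmQ
    _ = Topt T k l := by rw [← hsplit, insert_erase hlP, hP_eq]

end Topt

/-- Bellman equation for the optimal per-segment latency. -/
theorem Topt_bellman (T : ℕ → ℕ → ℝ) (k l : ℕ) (hkl : k < l) :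
    Topt T k l =
      ((Finset.Ico k l).image (fun m => Topt T k m + T m l)).min'
        ((Finset.nonempty_Ico.mpr hkl).image _) := by
  obtain ⟨m, hm, hm_le⟩ := Topt.exists_add_le T hkl
  refine le_antisymm (le_min' _ _ _ (forall_mem_image.2 fun m' hm' => ?_)) ?_
  · exact Topt.le_add T (mem_Ico.1 hm').1 (mem_Ico.1 hm').2
  · exact (min'_le _ _ (mem_image_of_mem _ hm)).trans hm_le
end
end

section
/- Let 0 < k < l be natural numbers and let A be a nonempty finite subset of {1, …, l−1} whose maximum element is k. Then the minimum over all finite sets S with A ⊆ S ⊆ {1, …, l−1} of chainSum T ({0} ∪ S ∪ {l}) equals (the minimum over all finite sets S' with A \ {k} ⊆ S' ⊆ {1, …, k−1} of chainSum T ({0} ∪ S' ∪ {k})) + T_opt(k, l). -/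
/-!
Every admissible `S` contains `k = max A`, so the chain `0 → S → l` passes through `k` and its
chain sum splits there into a chain `0 → k` through `A \ {k}` and an unconstrained chain `k → l`;
conversely any two such chains concatenate to an admissible one. Hence the set of chain sums
through `A` is the Minkowski sum of the two smaller sets, and the least element of a Minkowski
sum is the sum of the least elements.
-/

noncomputable section

open Finset

theorem List.sum_zipWith_tail_append {α β : Type*} [AddMonoid β] (f : α → α → β) (a : α) :
    ∀ l₁ l₂ : List α, (zipWith f (l₁ ++ a :: l₂) (l₁ ++ a :: l₂).tail).sum =
      (zipWith f (l₁ ++ [a]) (l₁ ++ [a]).tail).sum + (zipWith f (a :: l₂) l₂).sum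
  | [], _ => by simp
  | [_], _ => by simp
  | b :: c :: l₁, l₂ => by
    have ih := sum_zipWith_tail_append f a (c :: l₁) l₂
    simp only [cons_append, tail_cons, zipWith_cons_cons, sum_cons] at ih ⊢
    rw [ih, add_assoc]

theorem Finset.sort_union_of_forall_lt_s10 {α : Type*} [LinearOrder α] {s t : Finset α}
    (h : ∀ a ∈ s, ∀ b ∈ t, a < b) : (s ∪ t).sort (· ≤ ·) = s.sort (· ≤ ·) ++ t.sort (· ≤ ·) := by
  refine (sortedLT_sort _).eq_of_mem_iff ?_ (by simp)
  rw [List.sortedLT_iff_pairwise, List.pairwise_append]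
  exact ⟨(sortedLT_sort s).pairwise, (sortedLT_sort t).pairwise, by simpa using h⟩

theorem chainSum_union_singleton_union (f : ℕ → ℕ → ℝ) {P Q : Finset ℕ} {k : ℕ}
    (hP : ∀ p ∈ P, p < k) (hQ : ∀ q ∈ Q, k < q) :
    chainSum f (P ∪ {k} ∪ Q) = chainSum f (P ∪ {k}) + chainSum f ({k} ∪ Q) := by
  have hPk : (P ∪ {k}).sort (· ≤ ·) = P.sort (· ≤ ·) ++ [k] := by
    rw [sort_union_of_forall_lt_s10 (by simpa using hP), sort_singleton]
  have hkQ : ({k} ∪ Q).sort (· ≤ ·) = k :: Q.sort (· ≤ ·) := by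
    rw [sort_union_of_forall_lt_s10 (by simpa using hQ), sort_singleton, List.singleton_append]
  have hPkQ : (P ∪ {k} ∪ Q).sort (· ≤ ·) = P.sort (· ≤ ·) ++ k :: Q.sort (· ≤ ·) := by
    rw [sort_union_of_forall_lt_s10, hPk, List.append_assoc, List.singleton_append]
    simp only [mem_union, mem_singleton]
    rintro p (hp | rfl) q hq
    exacts [(hP p hp).trans (hQ q hq), hQ q hq]
  rw [chainSum, chainSum, chainSum, hPkQ, hPk, hkQ, List.sum_zipWith_tail_append]
  rfl

theorem chainSum_split_at_s10 (f : ℕ → ℕ → ℝ) {lo k hi : ℕ} {S₁ S₂ : Finset ℕ} (hlo : lo < k)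
    (hhi : k < hi) (hS₁ : S₁ ⊆ Ioo lo k) (hS₂ : S₂ ⊆ Ioo k hi) :
    chainSum f ({lo} ∪ (S₁ ∪ {k} ∪ S₂) ∪ {hi}) =
      chainSum f ({lo} ∪ S₁ ∪ {k}) + chainSum f ({k} ∪ S₂ ∪ {hi}) := by
  have key := chainSum_union_singleton_union f (P := {lo} ∪ S₁) (Q := S₂ ∪ {hi}) (k := k)
    (by simpa [or_imp, forall_and, hlo] using fun p hp => (mem_Ioo.mp (hS₁ hp)).2)
    (by simpa [or_imp, forall_and, hhi] using fun q hq => (mem_Ioo.mp (hS₂ hq)).1)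
  simpa only [union_assoc] using key

def chainSumsThrough (f : ℕ → ℕ → ℝ) (lo hi : ℕ) (A : Finset ℕ) : Set ℝ :=
  {z | ∃ S : Finset ℕ, A ⊆ S ∧ S ⊆ Ioo lo hi ∧ z = chainSum f ({lo} ∪ S ∪ {hi})}

theorem exists_isLeast_chainSumsThrough (f : ℕ → ℕ → ℝ) {lo hi : ℕ} {A : Finset ℕ}
    (hA : A ⊆ Ioo lo hi) : ∃ y, IsLeast (chainSumsThrough f lo hi A) y := by
  have hfin : (chainSumsThrough f lo hi A).Finite := by
    refine ((Ioo lo hi).powerset.image fun S => chainSum f ({lo} ∪ S ∪ {hi})).finite_toSet.subset ?_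
    rintro _ ⟨S, -, hS, rfl⟩
    exact mem_image_of_mem _ (mem_powerset.mpr hS)
  obtain ⟨y, hy, hmin⟩ := Set.exists_min_image _ id hfin ⟨_, A, subset_rfl, hA, rfl⟩
  exact ⟨y, hy, hmin⟩

theorem isLeast_Topt (T : ℕ → ℕ → ℝ) (k l : ℕ) :
    IsLeast (chainSumsThrough T k l ∅) (Topt T k l) := by
  have h : chainSumsThrough T k l ∅ =
      ((Ioo k l).powerset.image fun S => chainSum T ({k} ∪ S ∪ {l}) : Set ℝ) := by
    ext z
    simp only [chainSumsThrough, Set.mem_ofPred_eq, coe_image, Set.mem_image, mem_coe,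
      mem_powerset, empty_subset, true_and, eq_comm]
  rw [h]
  exact isLeast_min' _ _

theorem chainSumsThrough_union_singleton_union (f : ℕ → ℕ → ℝ) {lo k hi : ℕ} {B C : Finset ℕ}
    (hlo : lo < k) (hhi : k < hi) (hB : B ⊆ Ioo lo k) (hC : C ⊆ Ioo k hi) :
    chainSumsThrough f lo hi (B ∪ {k} ∪ C) =
      Set.image2 (· + ·) (chainSumsThrough f lo k B) (chainSumsThrough f k hi C) := by
  ext z
  constructor
  · rintro ⟨S, hBkC, hS, rfl⟩
    have hkS : k ∈ S := hBkC (by simp)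
    have hS_split : S = S ∩ Ioo lo k ∪ {k} ∪ S ∩ Ioo k hi := by
      ext a
      have ha := @hS a
      simp only [mem_union, mem_inter, mem_Ioo, mem_singleton] at ha ⊢
      grind
    refine ⟨_, ⟨S ∩ Ioo lo k, ?_, inter_subset_right, rfl⟩, _,
      ⟨S ∩ Ioo k hi, ?_, inter_subset_right, rfl⟩, ?_⟩
    · exact subset_inter (subset_union_left.trans (subset_union_left.trans hBkC)) hB
    · exact subset_inter (subset_union_right.trans hBkC) hC
    · conv_rhs => rw [hS_split]
      exact (chainSum_split_at_s10 f hlo hhi inter_subset_right inter_subset_right).symm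
  · rintro ⟨_, ⟨S₁, hB₁, hS₁, rfl⟩, _, ⟨S₂, hC₂, hS₂, rfl⟩, rfl⟩
    refine ⟨S₁ ∪ {k} ∪ S₂, union_subset_union (union_subset_union hB₁ subset_rfl) hC₂, ?_,
      (chainSum_split_at_s10 f hlo hhi hS₁ hS₂).symm⟩
    intro a
    simp only [mem_union, mem_singleton]
    rintro ((ha | rfl) | ha)
    · exact Ioo_subset_Ioo_right hhi.le (hS₁ ha)
    · exact mem_Ioo.mpr ⟨hlo, hhi⟩
    · exact Ioo_subset_Ioo_left hlo.le (hS₂ ha)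

/-- Decomposition of the optimal latency over merge patterns containing `A`, splitting
at the maximum element `k` of `A`. -/
theorem min_latency_split (T : ℕ → ℕ → ℝ) (k l : ℕ) (hk : 0 < k) (hkl : k < l)
    (A : Finset ℕ) (hA : A ⊆ Finset.Ioo 0 l) (hAne : A.Nonempty)
    (hmax : A.max' hAne = k) :
    ∃ x y : ℝ,
      IsLeast {z : ℝ | ∃ S : Finset ℕ, A ⊆ S ∧ S ⊆ Finset.Ioo 0 l ∧
        z = chainSum T ({0} ∪ S ∪ {l})} x ∧
      IsLeast {z : ℝ | ∃ S' : Finset ℕ, A \ {k} ⊆ S' ∧ S' ⊆ Finset.Ioo 0 k ∧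
        z = chainSum T ({0} ∪ S' ∪ {k})} y ∧
      x = y + Topt T k l := by
  have hkA : k ∈ A := hmax ▸ A.max'_mem hAne
  have hA_below : A \ {k} ⊆ Ioo 0 k := by
    intro a ha
    obtain ⟨haA, hak⟩ := mem_sdiff.mp ha
    exact mem_Ioo.mpr ⟨(mem_Ioo.mp (hA haA)).1,
      lt_of_le_of_ne (hmax ▸ A.le_max' a haA) (by simpa using hak)⟩
  have hsplit := chainSumsThrough_union_singleton_union T hk hkl hA_below (empty_subset _)
  rw [union_empty, sdiff_union_of_subset (singleton_subset_iff.mpr hkA)] at hsplit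
  obtain ⟨y, hy⟩ := exists_isLeast_chainSumsThrough T hA_below
  refine ⟨y + Topt T k l, y, ?_, hy, rfl⟩
  change IsLeast (chainSumsThrough T 0 l A) _
  rw [hsplit]
  exact hy.image2 (fun _ _ _ h => add_le_add_left h _) (fun _ _ _ h => add_le_add_right h _)
    (isLeast_Topt T k l)
end
end
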